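/- Let H be a real Hilbert space and F : H → H twice Fréchet differentiable, with, for every R > 0, bounds ‖F′(u)‖ ≤ M₁(R) and ‖F″(u)‖ ≤ M₂(R) on {u : ‖u‖ ≤ R}, and with F′(u) boundedly invertible and ‖[F′(u)]⁻¹‖ ≤ a‖u‖ + b for all u ∈ H, where a ≥ 0, b > 0. Fix f ∈ H and r > 0. Then there exist constants c > 0 and σ > 0 such that: for any two initial points w₁, w₂ with ‖w₁‖ ≤ r, ‖w₂‖ ≤ r, and ‖w₁ − w₂‖ ≤ σ, the solutions u(t, w₁), u(t, w₂) of the DSM equation u̇ = −[F′(u)]⁻¹(F(u) − f) with initial data w₁ and w₂ respectively satisfy sup_{t ≥ 0} ‖u(t, w₁) − u(t, w₂)‖ ≤ c ‖w₁ − w₂‖. -/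

import Mathlib

/-!
Along a DSM trajectory the residual obeys `d/dt (F u - f) = -(F u - f)`, so
`F (u t) - f = exp (-t) • (F w - f)`. In the time `s = 1 - exp (-t) ∈ [0, 1)` the trajectory
therefore solves `y' = -[F' y]⁻¹ (F w - f)`, whose right-hand side is frozen at the initial
residual, on a bounded time interval. Grönwall's inequality first keeps every trajectory starting
in the ball of radius `r` inside a fixed ball of radius `R`, on which `[F']⁻¹` is Lipschitz by the
resolvent identity; a second application compares two trajectories, whose initial distance and
initial residual gap `‖F w₁ - F w₂‖ ≤ M₁ ‖w₁ - w₂‖` grow by at most a fixed factor over `[0, 1)`.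
-/

open Set Metric Real
open scoped NNReal

theorem sub_eq_mul_sub_mul_of_mul_eq_one {R : Type*} [Ring R] {a a' b b' : R}
    (ha : a' * a = 1) (hb : b * b' = 1) : a' - b' = a' * (b - a) * b' := by
  rw [mul_sub, sub_mul, mul_assoc, hb, mul_one, ha, one_mul]

theorem LipschitzOnWith.inverse {X R : Type*} [PseudoMetricSpace X] [NormedRing R]
    {G G' : X → R} {s : Set X} {K A : ℝ≥0} (hG : LipschitzOnWith K G s)
    (hl : ∀ x ∈ s, G' x * G x = 1) (hr : ∀ x ∈ s, G x * G' x = 1)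
    (hA : ∀ x ∈ s, ‖G' x‖ ≤ A) : LipschitzOnWith (A * K * A) G' s := by
  refine LipschitzOnWith.of_dist_le_mul fun x hx y hy => ?_
  rw [dist_eq_norm, sub_eq_mul_sub_mul_of_mul_eq_one (hl x hx) (hr y hy)]
  calc ‖G' x * (G y - G x) * G' y‖ ≤ ‖G' x‖ * ‖G y - G x‖ * ‖G' y‖ := norm_mul₃_le
    _ ≤ A * (K * dist x y) * A := by
        gcongr
        · exact hA x hx
        · rw [← dist_eq_norm, dist_comm]; exact hG.dist_le_mul x hx y hy
        · exact hA y hy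
    _ = ↑(A * K * A) * dist x y := by push_cast; ring

theorem lipschitzOnWith_closedBall_of_norm_fderiv_le {E G : Type*} [NormedAddCommGroup E]
    [NormedSpace ℝ E] [NormedAddCommGroup G] [NormedSpace ℝ G] {g : E → G}
    {g' : E → E →L[ℝ] G} {R M : ℝ} (hg : ∀ x, HasFDerivAt g (g' x) x)
    (hM : ∀ x, ‖x‖ ≤ R → ‖g' x‖ ≤ M) : LipschitzOnWith M.toNNReal g (closedBall 0 R) :=
  (convex_closedBall 0 R).lipschitzOnWith_of_nnnorm_hasFDerivWithin_le
    (fun x _ => (hg x).hasFDerivWithinAt) fun x hx => by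
      rw [← norm_toNNReal]
      exact Real.toNNReal_le_toNNReal (hM x (mem_closedBall_zero_iff.1 hx))

theorem LipschitzOnWith.norm_sub_le_of_norm_le {E G : Type*} [SeminormedAddCommGroup E]
    [SeminormedAddCommGroup G] {g : E → G} {K : ℝ≥0} {r : ℝ}
    (hg : LipschitzOnWith K g (closedBall 0 r)) (v : G) {w : E} (hw : ‖w‖ ≤ r) :
    ‖g w - v‖ ≤ ‖g 0 - v‖ + K * r := by
  have h := hg.norm_sub_le (mem_closedBall_zero_iff.2 hw)
    (mem_closedBall_self ((norm_nonneg w).trans hw))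
  rw [sub_zero] at h
  calc ‖g w - v‖ ≤ ‖g w - g 0‖ + ‖g 0 - v‖ := norm_sub_le_norm_sub_add_norm_sub _ _ _
    _ ≤ K * r + ‖g 0 - v‖ := by gcongr; exact h.trans (by gcongr)
    _ = ‖g 0 - v‖ + K * r := add_comm _ _

theorem gronwallBound_mul_right (δ K ε x : ℝ) :
    gronwallBound δ K (ε * δ) x = gronwallBound 1 K ε x * δ := by
  unfold gronwallBound
  split_ifs <;> ring

theorem le_gronwallBound {δ K ε x : ℝ} (hδ : 0 ≤ δ) (hK : 0 ≤ K) (hε : 0 ≤ ε) (hx : 0 ≤ x) :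
    δ ≤ gronwallBound δ K ε x := by
  simpa only [gronwallBound_x0] using gronwallBound_mono hδ hε hK hx

section

variable {E : Type*} [NormedAddCommGroup E] [NormedSpace ℝ E]

theorem norm_le_gronwallBound_one {g g' : ℝ → E} {δ K ε : ℝ} (hK : 0 ≤ K) (hε : 0 ≤ ε)
    (hg : ContinuousOn g (Ico 0 1))
    (hg' : ∀ x ∈ Ico (0 : ℝ) 1, HasDerivWithinAt g (g' x) (Ici x) x)
    (h0 : ‖g 0‖ ≤ δ) (bound : ∀ x ∈ Ico (0 : ℝ) 1, ‖g' x‖ ≤ K * ‖g x‖ + ε) :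
    ∀ x ∈ Ico (0 : ℝ) 1, ‖g x‖ ≤ gronwallBound δ K ε 1 := by
  intro x hx
  have hsub : Icc 0 x ⊆ Ico (0 : ℝ) 1 := Icc_subset_Ico_right hx.2
  calc ‖g x‖ ≤ gronwallBound δ K ε (x - 0) :=
        norm_le_gronwallBound_of_norm_deriv_right_le (hg.mono hsub)
          (fun y hy => hg' y (hsub (Ico_subset_Icc_self hy))) h0
          (fun y hy => bound y (hsub (Ico_subset_Icc_self hy))) x ⟨hx.1, le_rfl⟩
    _ ≤ gronwallBound δ K ε 1 :=
        gronwallBound_mono ((norm_nonneg _).trans h0) hε hK (by linarith [hx.2])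

theorem eq_exp_neg_smul_of_hasDerivWithinAt_neg {g : ℝ → E}
    (hg : ∀ t ∈ Ici (0 : ℝ), HasDerivWithinAt g (-g t) (Ici 0) t) :
    ∀ t ∈ Ici (0 : ℝ), g t = exp (-t) • g 0 := by
  have hconst : ∀ t ∈ Ici (0 : ℝ),
      HasDerivWithinAt (fun t => exp t • g t) 0 (Ici 0) t := fun t ht => by
    convert (hasDerivAt_exp t).hasDerivWithinAt.fun_smul (hg t ht) using 1
    rw [smul_neg, neg_add_cancel]
  intro t ht
  have h := (convex_Ici 0).norm_image_sub_le_of_norm_hasDerivWithin_le hconst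
    (fun _ _ => (norm_zero (E := E)).le) self_mem_Ici ht
  rw [zero_mul, norm_le_zero_iff, sub_eq_zero, exp_zero, one_smul] at h
  rw [← h, smul_smul, ← exp_add, neg_add_cancel, exp_zero, one_smul]

noncomputable def dsmTime (s : ℝ) : ℝ := -log (1 - s)

theorem dsmTime_nonneg {s : ℝ} (h₀ : 0 ≤ s) (h₁ : s < 1) : 0 ≤ dsmTime s :=
  neg_nonneg.2 (log_nonpos (by linarith) (by linarith))

theorem exp_neg_dsmTime {s : ℝ} (h : s < 1) : exp (-dsmTime s) = 1 - s := by
  rw [dsmTime, neg_neg, exp_log (by linarith)]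

theorem dsmTime_one_sub_exp_neg (t : ℝ) : dsmTime (1 - exp (-t)) = t := by
  rw [dsmTime, sub_sub_cancel, log_exp, neg_neg]

theorem one_sub_exp_neg_mem_Ico {t : ℝ} (ht : 0 ≤ t) : 1 - exp (-t) ∈ Ico (0 : ℝ) 1 :=
  ⟨sub_nonneg.2 (exp_le_one_iff.2 (neg_nonpos.2 ht)), sub_lt_self 1 (exp_pos _)⟩

theorem hasDerivAt_dsmTime {s : ℝ} (h : s < 1) : HasDerivAt dsmTime (1 - s)⁻¹ s := by
  have h' := (((hasDerivAt_id s).const_sub 1).log (sub_ne_zero.2 h.ne')).neg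
  rwa [neg_div, neg_neg, one_div] at h'

def IsDSMTrajectory (F : E → E) (Finv : E → E →L[ℝ] E) (f : E) (u : ℝ → E) : Prop :=
  ∀ t ∈ Ici (0 : ℝ), HasDerivWithinAt u (-(Finv (u t) (F (u t) - f))) (Ici 0) t

namespace IsDSMTrajectory

variable {F : E → E} {F' Finv : E → E →L[ℝ] E} {f : E} {u u₁ u₂ : ℝ → E}

theorem residual_eq (hu : IsDSMTrajectory F Finv f u) (hF' : ∀ x, HasFDerivAt F (F' x) x)
    (hinv : ∀ x, (F' x).comp (Finv x) = ContinuousLinearMap.id ℝ E) :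
    ∀ t ∈ Ici (0 : ℝ), F (u t) - f = exp (-t) • (F (u 0) - f) :=
  eq_exp_neg_smul_of_hasDerivWithinAt_neg fun t ht => by
    have h := ((hF' (u t)).comp_hasDerivWithinAt t (hu t ht)).sub_const f
    rwa [map_neg, ← ContinuousLinearMap.comp_apply, hinv, ContinuousLinearMap.id_apply] at h

theorem continuousOn_comp_dsmTime (hu : IsDSMTrajectory F Finv f u) :
    ContinuousOn (u ∘ dsmTime) (Ico 0 1) :=
  ContinuousOn.comp (fun t ht => (hu t ht).continuousWithinAt)
    (fun _ hs => (hasDerivAt_dsmTime hs.2).continuousAt.continuousWithinAt)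
    fun _ hs => dsmTime_nonneg hs.1 hs.2

theorem hasDerivWithinAt_comp_dsmTime (hu : IsDSMTrajectory F Finv f u)
    (hF' : ∀ x, HasFDerivAt F (F' x) x)
    (hinv : ∀ x, (F' x).comp (Finv x) = ContinuousLinearMap.id ℝ E) :
    ∀ s ∈ Ico (0 : ℝ) 1,
      HasDerivWithinAt (u ∘ dsmTime) (-(Finv (u (dsmTime s)) (F (u 0) - f))) (Ici s) s := by
  intro s hs
  have hτ := dsmTime_nonneg hs.1 hs.2
  have hmaps : MapsTo dsmTime (Ici s ∩ Iio 1) (Ici 0) := fun x hx =>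
    dsmTime_nonneg (hs.1.trans hx.1) hx.2
  have h := (hasDerivWithinAt_inter (Iio_mem_nhds hs.2)).1
    ((hu _ hτ).scomp s (hasDerivAt_dsmTime hs.2).hasDerivWithinAt hmaps)
  -- the speed `(1 - s)⁻¹` of the time change cancels the residual factor `exp (-dsmTime s)`
  rwa [hu.residual_eq hF' hinv _ hτ, exp_neg_dsmTime hs.2, map_smul, smul_neg, smul_smul,
    inv_mul_cancel₀ (sub_ne_zero.2 hs.2.ne'), one_smul] at h

theorem norm_le (hu : IsDSMTrajectory F Finv f u) (hF' : ∀ x, HasFDerivAt F (F' x) x)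
    (hinv : ∀ x, (F' x).comp (Finv x) = ContinuousLinearMap.id ℝ E) {a b r C : ℝ} (ha : 0 ≤ a)
    (hbound : ∀ x, ‖Finv x‖ ≤ a * ‖x‖ + b) (hr : ‖u 0‖ ≤ r) (hC : ‖F (u 0) - f‖ ≤ C) :
    ∀ t ∈ Ici (0 : ℝ), ‖u t‖ ≤ gronwallBound r (a * C) (b * C) 1 := by
  have hC₀ : 0 ≤ C := (norm_nonneg _).trans hC
  have hb : 0 ≤ b := by simpa using (norm_nonneg _).trans (hbound 0)
  have hy := norm_le_gronwallBound_one (mul_nonneg ha hC₀) (mul_nonneg hb hC₀)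
    hu.continuousOn_comp_dsmTime (hu.hasDerivWithinAt_comp_dsmTime hF' hinv)
    (by simpa [dsmTime] using hr) fun s _ => ?_
  · intro t ht
    simpa [dsmTime_one_sub_exp_neg] using hy _ (one_sub_exp_neg_mem_Ico ht)
  set x := u (dsmTime s)
  calc ‖-(Finv x (F (u 0) - f))‖ ≤ ‖Finv x‖ * ‖F (u 0) - f‖ := by
        rw [norm_neg]; exact (Finv x).le_opNorm _
    _ ≤ (a * ‖x‖ + b) * C := mul_le_mul (hbound x) hC (norm_nonneg _)
        ((norm_nonneg _).trans (hbound x))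
    _ = a * C * ‖(u ∘ dsmTime) s‖ + b * C := by simp only [Function.comp_apply, x]; ring

theorem norm_sub_le (hu₁ : IsDSMTrajectory F Finv f u₁) (hu₂ : IsDSMTrajectory F Finv f u₂)
    (hF' : ∀ x, HasFDerivAt F (F' x) x)
    (hinv : ∀ x, (F' x).comp (Finv x) = ContinuousLinearMap.id ℝ E) {s : Set E} {K : ℝ≥0}
    {A C η : ℝ} (hK : LipschitzOnWith K Finv s) (hA : ∀ x ∈ s, ‖Finv x‖ ≤ A)
    (hs₁ : ∀ t ∈ Ici (0 : ℝ), u₁ t ∈ s) (hs₂ : ∀ t ∈ Ici (0 : ℝ), u₂ t ∈ s)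
    (hC : ‖F (u₁ 0) - f‖ ≤ C) (hη : ‖F (u₁ 0) - F (u₂ 0)‖ ≤ η) :
    ∀ t ∈ Ici (0 : ℝ), ‖u₁ t - u₂ t‖ ≤ gronwallBound ‖u₁ 0 - u₂ 0‖ (K * C) (A * η) 1 := by
  have hA₀ : 0 ≤ A := (norm_nonneg _).trans (hA _ (hs₂ 0 self_mem_Ici))
  have hy := norm_le_gronwallBound_one (δ := ‖u₁ 0 - u₂ 0‖)
    (mul_nonneg K.2 ((norm_nonneg _).trans hC)) (mul_nonneg hA₀ ((norm_nonneg _).trans hη))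
    (hu₁.continuousOn_comp_dsmTime.sub hu₂.continuousOn_comp_dsmTime)
    (fun s hs => (hu₁.hasDerivWithinAt_comp_dsmTime hF' hinv s hs).sub
      (hu₂.hasDerivWithinAt_comp_dsmTime hF' hinv s hs))
    (by simp [dsmTime]) fun σ hσ => ?_
  · intro t ht
    simpa [dsmTime_one_sub_exp_neg] using hy _ (one_sub_exp_neg_mem_Ico ht)
  have hx₁ := hs₁ _ (dsmTime_nonneg hσ.1 hσ.2)
  have hx₂ := hs₂ _ (dsmTime_nonneg hσ.1 hσ.2)
  set x₁ := u₁ (dsmTime σ)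
  set x₂ := u₂ (dsmTime σ)
  set v₁ := F (u₁ 0) - f
  set v₂ := F (u₂ 0) - f
  have hv : v₂ - v₁ = -(F (u₁ 0) - F (u₂ 0)) := by rw [sub_sub_sub_cancel_right, neg_sub]
  calc ‖-(Finv x₁ v₁) - -(Finv x₂ v₂)‖ = ‖(Finv x₂ - Finv x₁) v₁ + Finv x₂ (v₂ - v₁)‖ := by
        rw [sub_apply, map_sub (Finv x₂) v₂ v₁]; congr 1; abel
    _ ≤ ‖Finv x₂ - Finv x₁‖ * ‖v₁‖ + ‖Finv x₂‖ * ‖v₂ - v₁‖ :=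
        (norm_add_le _ _).trans (add_le_add (ContinuousLinearMap.le_opNorm _ _)
          (ContinuousLinearMap.le_opNorm _ _))
    _ ≤ K * ‖x₁ - x₂‖ * C + A * η := by
        rw [hv, norm_neg, norm_sub_rev x₁]
        gcongr
        · exact hK.norm_sub_le hx₂ hx₁
        · exact hA x₂ hx₂
    _ = K * C * ‖(u₁ ∘ dsmTime - u₂ ∘ dsmTime) σ‖ + A * η := by
        simp only [Pi.sub_apply, Function.comp_apply, x₁, x₂]; ring

end IsDSMTrajectory

end

theorem dsm_continuous_dependence_general
    {H : Type*} [NormedAddCommGroup H] [InnerProductSpace ℝ H]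
    (F : H → H) (F' : H → H →L[ℝ] H) (F'' : H → H →L[ℝ] H →L[ℝ] H)
    (Finv : H → H →L[ℝ] H)
    (hF' : ∀ u, HasFDerivAt F (F' u) u)
    (hF'' : ∀ u, HasFDerivAt F' (F'' u) u)
    (hM : ∀ R > (0:ℝ), ∃ M₁ M₂ : ℝ, ∀ u : H, ‖u‖ ≤ R → ‖F' u‖ ≤ M₁ ∧ ‖F'' u‖ ≤ M₂)
    (a b : ℝ) (ha : 0 ≤ a)
    (hinv_left : ∀ u, (Finv u).comp (F' u) = ContinuousLinearMap.id ℝ H)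
    (hinv_right : ∀ u, (F' u).comp (Finv u) = ContinuousLinearMap.id ℝ H)
    (hinv_bound : ∀ u : H, ‖Finv u‖ ≤ a * ‖u‖ + b)
    (f : H) (r : ℝ) (hr : 0 < r) :
    ∃ c > (0:ℝ), ∃ σ > (0:ℝ),
      ∀ (w₁ w₂ : H) (u₁ u₂ : ℝ → H),
        ‖w₁‖ ≤ r → ‖w₂‖ ≤ r → ‖w₁ - w₂‖ ≤ σ →
        u₁ 0 = w₁ → u₂ 0 = w₂ →
        (∀ t ∈ Ici (0:ℝ),
          HasDerivWithinAt u₁ (-(Finv (u₁ t) (F (u₁ t) - f))) (Ici (0:ℝ)) t) →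
        (∀ t ∈ Ici (0:ℝ),
          HasDerivWithinAt u₂ (-(Finv (u₂ t) (F (u₂ t) - f))) (Ici (0:ℝ)) t) →
        ∀ t ∈ Ici (0:ℝ), ‖u₁ t - u₂ t‖ ≤ c * ‖w₁ - w₂‖ := by
  obtain ⟨M₁, _, hM₁⟩ := hM r hr
  have hF_lip := lipschitzOnWith_closedBall_of_norm_fderiv_le hF' fun x hx => (hM₁ x hx).1
  set C := ‖F 0 - f‖ + M₁.toNNReal * r
  have hC₀ : 0 ≤ C :=
    (norm_nonneg _).trans (hF_lip.norm_sub_le_of_norm_le f (norm_zero.trans_le hr.le))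
  have hb : 0 ≤ b := by simpa using (norm_nonneg _).trans (hinv_bound 0)
  set R := gronwallBound r (a * C) (b * C) 1
  have hrR : r ≤ R := le_gronwallBound hr.le (by positivity) (by positivity) zero_le_one
  obtain ⟨_, M₂, hM₂⟩ := hM R (hr.trans_le hrR)
  set A := (a * R + b).toNNReal
  have hA : ∀ x ∈ closedBall (0 : H) R, ‖Finv x‖ ≤ A := fun x hx =>
    calc ‖Finv x‖ ≤ a * ‖x‖ + b := hinv_bound x
      _ ≤ a * R + b := by gcongr; exact mem_closedBall_zero_iff.1 hx
      _ ≤ A := Real.le_coe_toNNReal _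
  have hFinv_lip := (lipschitzOnWith_closedBall_of_norm_fderiv_le hF'' fun x hx =>
    (hM₂ x hx).2).inverse (fun x _ => hinv_left x) (fun x _ => hinv_right x) hA
  refine ⟨gronwallBound 1 (↑(A * M₂.toNNReal * A) * C) (A * M₁.toNNReal) 1,
    one_pos.trans_le (le_gronwallBound zero_le_one (by positivity) (by positivity) zero_le_one),
    1, one_pos, ?_⟩
  rintro w₁ w₂ u₁ u₂ hw₁ hw₂ - rfl rfl hu₁ hu₂ t ht
  have h_mem : ∀ u : ℝ → H, IsDSMTrajectory F Finv f u → ‖u 0‖ ≤ r →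
      ∀ t ∈ Ici (0 : ℝ), u t ∈ closedBall 0 R := fun u hu hu₀ t ht =>
    mem_closedBall_zero_iff.2 <| IsDSMTrajectory.norm_le hu hF' hinv_right ha hinv_bound hu₀
      (hF_lip.norm_sub_le_of_norm_le f hu₀) t ht
  have h_dist := IsDSMTrajectory.norm_sub_le hu₁ hu₂ hF' hinv_right hFinv_lip hA
    (h_mem u₁ hu₁ hw₁) (h_mem u₂ hu₂ hw₂) (hF_lip.norm_sub_le_of_norm_le f hw₁)
    (hF_lip.norm_sub_le (mem_closedBall_zero_iff.2 hw₁) (mem_closedBall_zero_iff.2 hw₂)) t ht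
  rwa [← mul_assoc, gronwallBound_mul_right] at h_dist

/-- Continuous dependence of DSM trajectories on the initial
point: under the Hadamard-type hypotheses, for every `f` and `r > 0` there are
`c > 0` and `σ > 0` such that any two DSM solutions starting at points
`w₁, w₂` with `‖w₁‖ ≤ r`, `‖w₂‖ ≤ r`, `‖w₁ - w₂‖ ≤ σ` satisfy
`sup_{t ≥ 0} ‖u(t,w₁) - u(t,w₂)‖ ≤ c ‖w₁ - w₂‖`. -/
theorem dsm_continuous_dependence
    {H : Type*} [NormedAddCommGroup H] [InnerProductSpace ℝ H] [CompleteSpace H]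
    (F : H → H) (F' : H → H →L[ℝ] H) (F'' : H → H →L[ℝ] H →L[ℝ] H)
    (Finv : H → H →L[ℝ] H)
    (hF' : ∀ u, HasFDerivAt F (F' u) u)
    (hF'' : ∀ u, HasFDerivAt F' (F'' u) u)
    (hM : ∀ R > (0:ℝ), ∃ M₁ M₂ : ℝ, ∀ u : H, ‖u‖ ≤ R → ‖F' u‖ ≤ M₁ ∧ ‖F'' u‖ ≤ M₂)
    (a b : ℝ) (ha : 0 ≤ a) (hb : 0 < b)
    (hinv_left : ∀ u, (Finv u).comp (F' u) = ContinuousLinearMap.id ℝ H)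
    (hinv_right : ∀ u, (F' u).comp (Finv u) = ContinuousLinearMap.id ℝ H)
    (hinv_bound : ∀ u : H, ‖Finv u‖ ≤ a * ‖u‖ + b)
    (f : H) (r : ℝ) (hr : 0 < r) :
    ∃ c > (0:ℝ), ∃ σ > (0:ℝ),
      ∀ (w₁ w₂ : H) (u₁ u₂ : ℝ → H),
        ‖w₁‖ ≤ r → ‖w₂‖ ≤ r → ‖w₁ - w₂‖ ≤ σ →
        u₁ 0 = w₁ → u₂ 0 = w₂ →
        (∀ t ∈ Ici (0:ℝ),
          HasDerivWithinAt u₁ (-(Finv (u₁ t) (F (u₁ t) - f))) (Ici (0:ℝ)) t) →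
        (∀ t ∈ Ici (0:ℝ),
          HasDerivWithinAt u₂ (-(Finv (u₂ t) (F (u₂ t) - f))) (Ici (0:ℝ)) t) →
        ∀ t ∈ Ici (0:ℝ), ‖u₁ t - u₂ t‖ ≤ c * ‖w₁ - w₂‖ :=
  dsm_continuous_dependence_general F F' F'' Finv hF' hF'' hM a b ha hinv_left hinv_right hinv_bound
    f r hr
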